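/- arXiv:2005.06794 — 7 statements merged into one kernel-verified Lean document; each statement's English description precedes it below -/
import Mathlib

section
/- Let f : ℝ → ℝ be smooth and let φ : ℝ² → ℝ be a smooth solution of the Hunter–Saxton equation, i.e. φ_{tx} + φ·φ_{xx} + (1/2)φ_x² = 0 on ℝ². Then the function ψ(t,x) := φ(t, x + f(t)) − f'(t) is also a smooth solution of the Hunter–Saxton equation on ℝ², i.e. ψ_{tx} + ψ·ψ_{xx} + (1/2)ψ_x² = 0 for all (t,x) ∈ ℝ². (This expresses that the vector fields Y_f = f(t)∂_x + f'(t)∂_u are point symmetries of the Hunter–Saxton equation.) -/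
/-!
Shifting to the frame `x ↦ x + f t` and subtracting its velocity `f' t` does not change `u_x` or
`u_xx`, while `u_tx` picks up `f' u_xx` from the chain rule; this is exactly cancelled by the
`-f' u_xx` that the transport term `u u_xx` loses.
-/

open Real

/-- Partial derivative of a function of two real variables w.r.t. its first argument. -/
noncomputable def d1 (f : ℝ → ℝ → ℝ) (a b : ℝ) : ℝ := deriv (fun s => f s b) a

/-- Partial derivative of a function of two real variables w.r.t. its second argument. -/
noncomputable def d2 (f : ℝ → ℝ → ℝ) (a b : ℝ) : ℝ := deriv (fun s => f a s) b

/-- A function of two real variables is smooth (infinitely differentiable). -/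
def Smooth2 (f : ℝ → ℝ → ℝ) : Prop := ContDiff ℝ (⊤ : ℕ∞) (fun p : ℝ × ℝ => f p.1 p.2)

open Function

section PartialDerivatives

variable {φ : ℝ → ℝ → ℝ}

lemma d1_eq_fderiv {a b : ℝ} (hφ : DifferentiableAt ℝ (uncurry φ) (a, b)) :
    d1 φ a b = fderiv ℝ (uncurry φ) (a, b) (1, 0) := by
  have hcurve : HasDerivAt (fun s => (s, b)) ((1 : ℝ), (0 : ℝ)) a :=
    (hasDerivAt_id a).prodMk (hasDerivAt_const a b)
  exact (hφ.hasFDerivAt.comp_hasDerivAt a hcurve).deriv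

lemma d2_eq_fderiv {a b : ℝ} (hφ : DifferentiableAt ℝ (uncurry φ) (a, b)) :
    d2 φ a b = fderiv ℝ (uncurry φ) (a, b) (0, 1) := by
  have hcurve : HasDerivAt (fun s => (a, s)) ((0 : ℝ), (1 : ℝ)) b :=
    (hasDerivAt_const b a).prodMk (hasDerivAt_id b)
  exact (hφ.hasFDerivAt.comp_hasDerivAt b hcurve).deriv

lemma hasDerivAt_comp_curve {a b : ℝ → ℝ} {a' b' t : ℝ}
    (hφ : DifferentiableAt ℝ (uncurry φ) (a t, b t))
    (ha : HasDerivAt a a' t) (hb : HasDerivAt b b' t) :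
    HasDerivAt (fun s => φ (a s) (b s))
      (a' * d1 φ (a t) (b t) + b' * d2 φ (a t) (b t)) t := by
  have hsplit : ((a', b') : ℝ × ℝ) = a' • ((1, 0) : ℝ × ℝ) + b' • ((0, 1) : ℝ × ℝ) := by
    simp
  have h := hφ.hasFDerivAt.comp_hasDerivAt t (ha.prodMk hb)
  rwa [hsplit, map_add, map_smul, map_smul, ← d1_eq_fderiv hφ, ← d2_eq_fderiv hφ] at h

lemma d2_comp_add_right (c : ℝ → ℝ) :
    d2 (fun t x => φ t (x + c t)) = fun t x => d2 φ t (x + c t) :=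
  funext₂ fun t x => deriv_comp_add_const (φ t) (c t) x

lemma d2_sub_const (g : ℝ → ℝ) : d2 (fun t x => φ t x - g t) = d2 φ :=
  funext₂ fun _ _ => deriv_sub_const _

lemma d1_comp_add_right {c : ℝ → ℝ} {t x : ℝ}
    (hφ : DifferentiableAt ℝ (uncurry φ) (t, x + c t)) (hc : DifferentiableAt ℝ c t) :
    d1 (fun t x => φ t (x + c t)) t x =
      d1 φ t (x + c t) + deriv c t * d2 φ t (x + c t) := by
  have h := hasDerivAt_comp_curve hφ (hasDerivAt_id t) (hc.hasDerivAt.const_add x)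
  simpa only [d1, id, one_mul] using h.deriv

lemma Smooth2.differentiableAt (hφ : Smooth2 φ) (p : ℝ × ℝ) :
    DifferentiableAt ℝ (uncurry φ) p :=
  hφ.differentiable (by simp) p

lemma smooth2_d2 (hφ : Smooth2 φ) : Smooth2 (d2 φ) := by
  have hfderiv : (fun p : ℝ × ℝ => d2 φ p.1 p.2) = fun p => fderiv ℝ (uncurry φ) p (0, 1) :=
    funext fun p => d2_eq_fderiv (hφ.differentiableAt p)
  rw [Smooth2, hfderiv]
  exact (contDiff_infty_iff_fderiv.mp hφ).2.clm_apply contDiff_const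

lemma Smooth2.comp_add_right (hφ : Smooth2 φ) {c : ℝ → ℝ} (hc : ContDiff ℝ (⊤ : ℕ∞) c) :
    Smooth2 (fun t x => φ t (x + c t)) :=
  hφ.comp (contDiff_fst.prodMk (contDiff_snd.add (hc.comp contDiff_fst)))

lemma Smooth2.sub_comp_fst (hφ : Smooth2 φ) {g : ℝ → ℝ} (hg : ContDiff ℝ (⊤ : ℕ∞) g) :
    Smooth2 (fun t x => φ t x - g t) :=
  hφ.sub (hg.comp contDiff_fst)

end PartialDerivatives

/-- The vector fields `Y_f = f(t)∂_x + f'(t)∂_u` are point symmetries of the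
Hunter–Saxton equation: if `φ` is a smooth solution, then so is
`ψ(t,x) = φ(t, x + f(t)) − f'(t)`. -/
theorem hunterSaxton_point_symmetry
    (f : ℝ → ℝ) (hf : ContDiff ℝ (⊤ : ℕ∞) f)
    (φ : ℝ → ℝ → ℝ) (hφ : Smooth2 φ)
    (hsol : ∀ t x : ℝ,
      d1 (d2 φ) t x + φ t x * d2 (d2 φ) t x + (1/2) * (d2 φ t x)^2 = 0)
    (ψ : ℝ → ℝ → ℝ)
    (hψ : ∀ t x : ℝ, ψ t x = φ t (x + f t) - deriv f t) :
    Smooth2 ψ ∧ ∀ t x : ℝ,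
      d1 (d2 ψ) t x + ψ t x * d2 (d2 ψ) t x + (1/2) * (d2 ψ t x)^2 = 0 := by
  obtain rfl : ψ = fun t x => φ t (x + f t) - deriv f t := funext₂ hψ
  refine ⟨(hφ.comp_add_right hf).sub_comp_fst (contDiff_infty_iff_deriv.mp hf).2, fun t x => ?_⟩
  have hd1 := d1_comp_add_right ((smooth2_d2 hφ).differentiableAt (t, x + f t))
    (hf.differentiable (by simp) t)
  rw [d2_sub_const (φ := fun t x => φ t (x + f t)), d2_comp_add_right, d2_comp_add_right, hd1]
  linear_combination hsol t (x + f t)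
end

section
/- Let U ⊆ ℝ² be open and let u : U → ℝ be a smooth solution of the Hunter–Saxton equation u_{tx} + u·u_{xx} + (1/2)u_x² = 0 on U. Let W ⊆ ℝ² be an open set containing {(t, u_x(t,x)) : (t,x) ∈ U} and let h : W → ℝ be smooth such that u_{xx}(t,x) = h(t, u_x(t,x)) for all (t,x) ∈ U. Then h satisfies the quotient equation of the Hunter–Saxton equation along the solution: for every (t,x) ∈ U, writing J = u_x(t,x), one has 2·∂₁h(t,J) − J²·∂₂h(t,J) + 4·J·h(t,J) = 0, where ∂₁h and ∂₂h denote the partial derivatives of h with respect to its first and second argument. -/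
/-!
Differentiating the equation `(u_t + u u_x)_x = u_x² / 2` once more in `x`, and using the
symmetry of mixed partials of `u_x`, shows that `H = u_xx` is transported as
`H_t + u H_x + 2 u_x H = 0`. Along `H = h(t, u_x)` the chain rule gives `H_x = h_J H` and
`H_t = h_I + h_J (u_x)_t`, and by the equation itself `(u_x)_t = -u H - u_x² / 2`. The terms
containing `u` cancel, leaving `h_I - (u_x² / 2) h_J + 2 u_x h = 0`.
-/

open Real

/-- A function of two real variables is smooth on a set `U ⊆ ℝ²`. -/
def Smooth2On (f : ℝ → ℝ → ℝ) (U : Set (ℝ × ℝ)) : Prop :=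
  ContDiffOn ℝ (⊤ : ℕ∞) (fun p : ℝ × ℝ => f p.1 p.2) U

open Filter Function Set Topology

theorem fderiv_clm_apply_const {𝕜 E F G : Type*} [NontriviallyNormedField 𝕜]
    [NormedAddCommGroup E] [NormedSpace 𝕜 E] [NormedAddCommGroup F] [NormedSpace 𝕜 F]
    [NormedAddCommGroup G] [NormedSpace 𝕜 G] {c : E → F →L[𝕜] G} {x : E}
    (hc : DifferentiableAt 𝕜 c x) (e : F) (w : E) :
    fderiv 𝕜 (fun y => c y e) x w = fderiv 𝕜 c x w e := by
  rw [fderiv_clm_apply hc (differentiableAt_const e)]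
  simp

section PartialDerivatives

variable {f g : ℝ → ℝ → ℝ} {p : ℝ × ℝ}

theorem d1_eq_fderiv_s1 (hf : DifferentiableAt ℝ (uncurry f) p) :
    d1 f p.1 p.2 = fderiv ℝ (uncurry f) p (1, 0) := by
  have hline : HasDerivAt (fun s : ℝ => (s, p.2)) ((1 : ℝ), (0 : ℝ)) p.1 :=
    (hasDerivAt_id p.1).prodMk (hasDerivAt_const p.1 p.2)
  exact (hf.hasFDerivAt.comp_hasDerivAt p.1 hline).deriv

theorem d2_eq_fderiv_s1 (hf : DifferentiableAt ℝ (uncurry f) p) :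
    d2 f p.1 p.2 = fderiv ℝ (uncurry f) p (0, 1) := by
  have hline : HasDerivAt (fun s : ℝ => (p.1, s)) ((0 : ℝ), (1 : ℝ)) p.2 :=
    (hasDerivAt_const p.2 p.1).prodMk (hasDerivAt_id p.2)
  exact (hf.hasFDerivAt.comp_hasDerivAt p.2 hline).deriv

theorem hasDerivAt_d1 (hf : DifferentiableAt ℝ (uncurry f) p) :
    HasDerivAt (fun s => f s p.2) (d1 f p.1 p.2) p.1 :=
  (hf.comp (f := fun s : ℝ => (s, p.2)) p.1
    (differentiableAt_id.prodMk (differentiableAt_const p.2))).hasDerivAt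

theorem hasDerivAt_d2 (hf : DifferentiableAt ℝ (uncurry f) p) :
    HasDerivAt (fun s => f p.1 s) (d2 f p.1 p.2) p.2 :=
  (hf.comp (f := fun s : ℝ => (p.1, s)) p.2
    ((differentiableAt_const p.1).prodMk differentiableAt_id)).hasDerivAt

theorem DifferentiableAt.hasDerivAt_comp_prodMk {x y : ℝ → ℝ} {x' y' s : ℝ}
    (hf : DifferentiableAt ℝ (uncurry f) (x s, y s)) (hx : HasDerivAt x x' s)
    (hy : HasDerivAt y y' s) :
    HasDerivAt (fun r => f (x r) (y r)) (d1 f (x s) (y s) * x' + d2 f (x s) (y s) * y') s := by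
  have hxy : ((x', y') : ℝ × ℝ) = x' • ((1 : ℝ), (0 : ℝ)) + y' • ((0 : ℝ), (1 : ℝ)) := by simp
  refine (hf.hasFDerivAt.comp_hasDerivAt s (hx.prodMk hy)).congr_deriv ?_
  rw [d1_eq_fderiv_s1 hf, d2_eq_fderiv_s1 hf, hxy, map_add, map_smul, map_smul, smul_eq_mul,
    smul_eq_mul, mul_comm, mul_comm y']

theorem d1_comp {h v : ℝ → ℝ → ℝ} (hh : DifferentiableAt ℝ (uncurry h) (p.1, v p.1 p.2))
    (hv : DifferentiableAt ℝ (fun s => v s p.2) p.1) :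
    d1 (fun a b => h a (v a b)) p.1 p.2
      = d1 h p.1 (v p.1 p.2) + d2 h p.1 (v p.1 p.2) * d1 v p.1 p.2 := by
  simpa [d1] using (hh.hasDerivAt_comp_prodMk (hasDerivAt_id p.1) hv.hasDerivAt).deriv

theorem d2_comp {h v : ℝ → ℝ → ℝ} (hh : DifferentiableAt ℝ (uncurry h) (p.1, v p.1 p.2))
    (hv : DifferentiableAt ℝ (fun s => v p.1 s) p.2) :
    d2 (fun a b => h a (v a b)) p.1 p.2 = d2 h p.1 (v p.1 p.2) * d2 v p.1 p.2 := by
  simpa [d2] using (hh.hasDerivAt_comp_prodMk (hasDerivAt_const p.2 p.1) hv.hasDerivAt).deriv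

theorem d1_congr (hfg : uncurry f =ᶠ[𝓝 p] uncurry g) : d1 f p.1 p.2 = d1 g p.1 p.2 :=
  EventuallyEq.deriv_eq <|
    hfg.comp_tendsto ((continuous_id.prodMk continuous_const).tendsto' p.1 p rfl)

theorem d2_congr (hfg : uncurry f =ᶠ[𝓝 p] uncurry g) : d2 f p.1 p.2 = d2 g p.1 p.2 :=
  EventuallyEq.deriv_eq <|
    hfg.comp_tendsto ((continuous_const.prodMk continuous_id).tendsto' p.2 p rfl)

end PartialDerivatives

section Smooth

variable {f : ℝ → ℝ → ℝ} {U : Set (ℝ × ℝ)}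

theorem Smooth2On.differentiableAt (hf : Smooth2On f U) (hU : IsOpen U) {p : ℝ × ℝ}
    (hp : p ∈ U) : DifferentiableAt ℝ (uncurry f) p :=
  (hf.contDiffAt (hU.mem_nhds hp)).differentiableAt (by simp)

theorem Smooth2On.contDiffOn_fderiv (hf : Smooth2On f U) (hU : IsOpen U) :
    ContDiffOn ℝ (⊤ : ℕ∞) (fderiv ℝ (uncurry f)) U :=
  ContDiffOn.fderiv_of_isOpen hf hU le_rfl

theorem Smooth2On.eqOn_d1 (hf : Smooth2On f U) (hU : IsOpen U) :
    EqOn (uncurry (d1 f)) (fun q => fderiv ℝ (uncurry f) q (1, 0)) U :=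
  fun _ hq => d1_eq_fderiv_s1 (hf.differentiableAt hU hq)

theorem Smooth2On.eqOn_d2 (hf : Smooth2On f U) (hU : IsOpen U) :
    EqOn (uncurry (d2 f)) (fun q => fderiv ℝ (uncurry f) q (0, 1)) U :=
  fun _ hq => d2_eq_fderiv_s1 (hf.differentiableAt hU hq)

theorem Smooth2On.smooth2On_d1 (hf : Smooth2On f U) (hU : IsOpen U) : Smooth2On (d1 f) U :=
  ((hf.contDiffOn_fderiv hU).clm_apply contDiffOn_const).congr (hf.eqOn_d1 hU)

theorem Smooth2On.smooth2On_d2 (hf : Smooth2On f U) (hU : IsOpen U) : Smooth2On (d2 f) U :=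
  ((hf.contDiffOn_fderiv hU).clm_apply contDiffOn_const).congr (hf.eqOn_d2 hU)

theorem Smooth2On.d1_d2_comm (hf : Smooth2On f U) (hU : IsOpen U) {p : ℝ × ℝ} (hp : p ∈ U) :
    d1 (d2 f) p.1 p.2 = d2 (d1 f) p.1 p.2 := by
  have hD : DifferentiableAt ℝ (fderiv ℝ (uncurry f)) p :=
    ((hf.contDiffOn_fderiv hU).contDiffAt (hU.mem_nhds hp)).differentiableAt (by simp)
  have hsymm : IsSymmSndFDerivAt ℝ (uncurry f) p :=
    (hf.contDiffAt (hU.mem_nhds hp)).isSymmSndFDerivAt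
      (by rw [minSmoothness_of_isRCLikeNormedField]; exact WithTop.coe_le_coe.2 le_top)
  rw [d1_eq_fderiv_s1 ((hf.smooth2On_d2 hU).differentiableAt hU hp),
    d2_eq_fderiv_s1 ((hf.smooth2On_d1 hU).differentiableAt hU hp),
    ((hf.eqOn_d2 hU).eventuallyEq_of_mem (hU.mem_nhds hp)).fderiv_eq,
    ((hf.eqOn_d1 hU).eventuallyEq_of_mem (hU.mem_nhds hp)).fderiv_eq,
    fderiv_clm_apply_const hD, fderiv_clm_apply_const hD]
  exact hsymm _ _

end Smooth

theorem hunterSaxton_d2_d2_transport {U : Set (ℝ × ℝ)} (hU : IsOpen U) {u : ℝ → ℝ → ℝ}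
    (hu : Smooth2On u U)
    (hsol : ∀ p ∈ U,
      d1 (d2 u) p.1 p.2 + u p.1 p.2 * d2 (d2 u) p.1 p.2 + (1/2) * (d2 u p.1 p.2)^2 = 0)
    {p : ℝ × ℝ} (hp : p ∈ U) :
    d1 (d2 (d2 u)) p.1 p.2 + u p.1 p.2 * d2 (d2 (d2 u)) p.1 p.2
      + 2 * d2 u p.1 p.2 * d2 (d2 u) p.1 p.2 = 0 := by
  have hv := hu.smooth2On_d2 hU
  have hH := hv.smooth2On_d2 hU
  have hlhs : HasDerivAt
      (fun s => d1 (d2 u) p.1 s + u p.1 s * d2 (d2 u) p.1 s + (1/2) * (d2 u p.1 s)^2)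
      (d2 (d1 (d2 u)) p.1 p.2
        + (d2 u p.1 p.2 * d2 (d2 u) p.1 p.2 + u p.1 p.2 * d2 (d2 (d2 u)) p.1 p.2)
        + (1/2) * ((2 : ℕ) * d2 u p.1 p.2 ^ (2 - 1) * d2 (d2 u) p.1 p.2)) p.2 :=
    ((hasDerivAt_d2 ((hv.smooth2On_d1 hU).differentiableAt hU hp)).add
      ((hasDerivAt_d2 (hu.differentiableAt hU hp)).mul
        (hasDerivAt_d2 (hH.differentiableAt hU hp)))).add
      ((hasDerivAt_d2 (hv.differentiableAt hU hp)).pow 2 |>.const_mul (1/2))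
  have hvanish : EqOn (uncurry fun a b =>
      d1 (d2 u) a b + u a b * d2 (d2 u) a b + (1/2) * (d2 u a b)^2) (uncurry fun _ _ => 0) U :=
    fun q hq => hsol q hq
  have hzero := hlhs.deriv.symm.trans
    ((d2_congr (hvanish.eventuallyEq_of_mem (hU.mem_nhds hp))).trans (deriv_const _ _))
  rw [← hv.d1_d2_comm hU hp] at hzero
  linear_combination hzero

/-- Along any smooth solution `u` of the Hunter–Saxton equation on an open set `U`,
a smooth function `h` with `u_{xx} = h(t, u_x)` satisfies the quotient equation
`2 h_I − J² h_J + 4 J h = 0` at `(I,J) = (t, u_x)`. -/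
theorem hunterSaxton_quotient
    (U : Set (ℝ × ℝ)) (hU : IsOpen U)
    (u : ℝ → ℝ → ℝ) (hu : Smooth2On u U)
    (hsol : ∀ p ∈ U,
      d1 (d2 u) p.1 p.2 + u p.1 p.2 * d2 (d2 u) p.1 p.2 + (1/2) * (d2 u p.1 p.2)^2 = 0)
    (W : Set (ℝ × ℝ)) (hW : IsOpen W)
    (hWsub : ∀ p ∈ U, (p.1, d2 u p.1 p.2) ∈ W)
    (h : ℝ → ℝ → ℝ) (hh : Smooth2On h W)
    (hcon : ∀ p ∈ U, d2 (d2 u) p.1 p.2 = h p.1 (d2 u p.1 p.2)) :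
    ∀ p ∈ U,
      2 * d1 h p.1 (d2 u p.1 p.2) - (d2 u p.1 p.2)^2 * d2 h p.1 (d2 u p.1 p.2)
        + 4 * (d2 u p.1 p.2) * h p.1 (d2 u p.1 p.2) = 0 := by
  intro p hp
  have hv := (hu.smooth2On_d2 hU).differentiableAt hU hp
  have hhp := hh.differentiableAt hW (hWsub p hp)
  have hHh : uncurry (d2 (d2 u)) =ᶠ[𝓝 p] uncurry fun a b => h a (d2 u a b) :=
    EqOn.eventuallyEq_of_mem (fun q hq => hcon q hq) (hU.mem_nhds hp)
  have hHt := (d1_congr hHh).trans (d1_comp hhp (hasDerivAt_d1 hv).differentiableAt)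
  have hHx := (d2_congr hHh).trans (d2_comp hhp (hasDerivAt_d2 hv).differentiableAt)
  rw [← hcon p hp]
  linear_combination 2 * hunterSaxton_d2_d2_transport hU hu hsol hp - 2 * hHt
    - 2 * u p.1 p.2 * hHx - 2 * d2 h p.1 (d2 u p.1 p.2) * hsol p hp
end

section
/- Let g : ℝ → ℝ be smooth and nowhere vanishing. Define h(I,J) := (2 − I·J)⁴ / (16·g(2J/(2 − I·J))) on the open set Ω = {(I,J) ∈ ℝ² : 2 − I·J ≠ 0}. Then h is a solution of the quotient equation of the Hunter–Saxton equation: 2·∂_I h(I,J) − J²·∂_J h(I,J) + 4·J·h(I,J) = 0 for all (I,J) ∈ Ω. -/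
open Real

/-!
The operator `X = 2 ∂_I - J² ∂_J` is a derivation with `X (2 - IJ) = -J (2 - IJ)` and
`X (2J/(2 - IJ)) = 0`: the second expression is a first integral of the characteristics of `X`.
Hence `X ((2 - IJ)⁴ / (16 g w)) = 4 (2 - IJ)³ X(2 - IJ) / (16 g w) = -4J h` for every `g`.
-/

open Topology

theorem d1_eq_of_eventuallyEq {f : ℝ → ℝ → ℝ} {F : ℝ → ℝ} {a b F' : ℝ}
    (hf : (fun s => f s b) =ᶠ[𝓝 a] F) (hF : HasDerivAt F F' a) : d1 f a b = F' := by
  rw [d1, hf.deriv_eq, hF.deriv]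

theorem d2_eq_of_eventuallyEq {f : ℝ → ℝ → ℝ} {F : ℝ → ℝ} {a b F' : ℝ}
    (hf : (fun s => f a s) =ᶠ[𝓝 b] F) (hF : HasDerivAt F F' b) : d2 f a b = F' := by
  rw [d2, hf.deriv_eq, hF.deriv]

theorem HasDerivAt.pow_four_div_const_mul_comp {g c w : ℝ → ℝ} {x c' w' : ℝ}
    (hg : DifferentiableAt ℝ g (w x)) (hg0 : g (w x) ≠ 0)
    (hc : HasDerivAt c c' x) (hw : HasDerivAt w w' x) :
    HasDerivAt (fun s => c s ^ 4 / (16 * g (w s)))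
      (c x ^ 3 * c' / (4 * g (w x)) - c x ^ 4 * _root_.deriv g (w x) * w' / (16 * g (w x) ^ 2))
      x := by
  refine ((hc.fun_pow 4).fun_div ((hg.hasDerivAt.comp x hw).const_mul 16)
    (by positivity)).congr_deriv ?_
  simp only [Function.comp_apply]
  field_simp
  ring

noncomputable def hsInvariant (I J : ℝ) : ℝ := 2 * J / (2 - I * J)

section

variable {I J : ℝ}

theorem hasDerivAt_two_sub_mul_fst : HasDerivAt (fun s => 2 - s * J) (-J) I := by
  simpa using ((hasDerivAt_id I).mul_const J).const_sub 2

theorem hasDerivAt_two_sub_mul_snd : HasDerivAt (fun s => 2 - I * s) (-I) J := by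
  simpa using ((hasDerivAt_id J).const_mul I).const_sub 2

theorem hasDerivAt_hsInvariant_fst (hc : 2 - I * J ≠ 0) :
    HasDerivAt (fun s => hsInvariant s J) (2 * J ^ 2 / (2 - I * J) ^ 2) I :=
  ((hasDerivAt_const I (2 * J)).fun_div hasDerivAt_two_sub_mul_fst hc).congr_deriv (by ring)

theorem hasDerivAt_hsInvariant_snd (hc : 2 - I * J ≠ 0) :
    HasDerivAt (fun s => hsInvariant I s) (4 / (2 - I * J) ^ 2) J :=
  (((hasDerivAt_id' J).const_mul 2).fun_div hasDerivAt_two_sub_mul_snd hc).congr_deriv (by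
    field_simp; ring)

end

/-- For any smooth nowhere-vanishing `g`, the function
`h(I,J) = (2 − IJ)⁴ / (16 g(2J/(2−IJ)))` solves the quotient equation of the
Hunter–Saxton equation, `2 h_I − J² h_J + 4 J h = 0`, on `Ω = {2 − IJ ≠ 0}`. -/
theorem hunterSaxton_quotient_general_solution
    (g : ℝ → ℝ) (hg : ContDiff ℝ (⊤ : ℕ∞) g) (hg0 : ∀ w : ℝ, g w ≠ 0)
    (h : ℝ → ℝ → ℝ)
    (hdef : ∀ I J : ℝ, 2 - I * J ≠ 0 →
      h I J = (2 - I * J)^4 / (16 * g (2 * J / (2 - I * J)))) :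
    ∀ I J : ℝ, 2 - I * J ≠ 0 →
      2 * d1 h I J - J^2 * d2 h I J + 4 * J * h I J = 0 := by
  intro I J hc
  have hgd : Differentiable ℝ g := hg.differentiable (by simp)
  have hI : (fun s => h s J) =ᶠ[𝓝 I] fun s => (2 - s * J) ^ 4 / (16 * g (hsInvariant s J)) :=
    (hasDerivAt_two_sub_mul_fst.continuousAt.eventually_ne hc).mono fun s hs => hdef s J hs
  have hJ : (fun s => h I s) =ᶠ[𝓝 J] fun s => (2 - I * s) ^ 4 / (16 * g (hsInvariant I s)) :=
    (hasDerivAt_two_sub_mul_snd.continuousAt.eventually_ne hc).mono fun s hs => hdef I s hs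
  have hIJ : h I J = (2 - I * J) ^ 4 / (16 * g (hsInvariant I J)) := hdef I J hc
  rw [d1_eq_of_eventuallyEq hI (hasDerivAt_two_sub_mul_fst.pow_four_div_const_mul_comp (hgd _)
      (hg0 _) (hasDerivAt_hsInvariant_fst hc)),
    d2_eq_of_eventuallyEq hJ (hasDerivAt_two_sub_mul_snd.pow_four_div_const_mul_comp (hgd _)
      (hg0 _) (hasDerivAt_hsInvariant_snd hc)), hIJ]
  have hXc : 2 * -J - J ^ 2 * -I = -J * (2 - I * J) := by ring
  have hXw : 2 * (2 * J ^ 2 / (2 - I * J) ^ 2) - J ^ 2 * (4 / (2 - I * J) ^ 2) = 0 := by ring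
  set c := 2 - I * J
  set w := hsInvariant I J
  linear_combination c ^ 3 / (4 * g w) * hXc - c ^ 4 * deriv g w / (16 * g w ^ 2) * hXw
end

section
/- Let U := {(t,x) ∈ ℝ² : t ≠ 0 and t³ + 3tx + 1 > 0} and define u : U → ℝ by u(t,x) := (1 + 2tx − (t³ + 3tx + 1)^{2/3}) / t², where the power is the real power of a positive real number. Then u is a smooth solution of the Hunter–Saxton equation on U: u_{tx} + u·u_{xx} + (1/2)u_x² = 0 for all (t,x) ∈ U. -/
/-!
Write `A = (t³ + 3tx + 1)^{1/3}`, so that `u = (1 + 2tx − A²)/t²`. Differentiating,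
`u_x = 2(1 − A⁻¹)/t`, `u_xx = 2A⁻⁴` and
`u_tx = −2(1 − A⁻¹)/t² + 2(t² + x)A⁻⁴/t`; multiplied by `t²A⁴/2`, the left side of the
equation becomes `t³ + 3tx + 1 − A³ = 0`.
Since `U` is open, `d2 u` agrees with the closed form of `u_x` near every point of `U`, so its
partial derivatives there are those of the closed form.
-/

open Real

open Filter Function Set Topology

section PartialDerivatives

variable {f g : ℝ → ℝ → ℝ} {U : Set (ℝ × ℝ)} {p : ℝ × ℝ}

theorem d1_congr_of_eqOn (hU : IsOpen U) (hfg : EqOn (uncurry f) (uncurry g) U) (hp : p ∈ U) :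
    d1 f p.1 p.2 = d1 g p.1 p.2 := by
  have hslice : ∀ᶠ s in 𝓝 p.1, (s, p.2) ∈ U :=
    (continuous_id.prodMk continuous_const).continuousAt.preimage_mem_nhds (hU.mem_nhds hp)
  exact EventuallyEq.deriv_eq (hslice.mono fun s hs => hfg hs)

theorem d2_congr_of_eqOn (hU : IsOpen U) (hfg : EqOn (uncurry f) (uncurry g) U) (hp : p ∈ U) :
    d2 f p.1 p.2 = d2 g p.1 p.2 := by
  have hslice : ∀ᶠ s in 𝓝 p.2, (p.1, s) ∈ U :=
    (continuous_const.prodMk continuous_id).continuousAt.preimage_mem_nhds (hU.mem_nhds hp)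
  exact EventuallyEq.deriv_eq (hslice.mono fun s hs => hfg hs)

end PartialDerivatives

theorem rpow_intCast_div_eq_zpow {g : ℝ} (hg : 0 ≤ g) (k : ℤ) (n : ℝ) :
    g ^ ((k : ℝ) / n) = (g ^ (1 / n)) ^ k := by
  rw [← rpow_intCast, ← rpow_mul hg, one_div_mul_eq_div]

namespace HunterSaxton

def cubic (t x : ℝ) : ℝ := t ^ 3 + 3 * t * x + 1

def domain : Set (ℝ × ℝ) := {p | p.1 ≠ 0 ∧ 0 < cubic p.1 p.2}

noncomputable def sol (t x : ℝ) : ℝ := (1 + 2 * t * x - cubic t x ^ ((2 : ℝ) / 3)) / t ^ 2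

noncomputable def solX (t x : ℝ) : ℝ := 2 * (1 - cubic t x ^ (-1 / 3 : ℝ)) / t

noncomputable def solXX (t x : ℝ) : ℝ := 2 * cubic t x ^ (-4 / 3 : ℝ)

noncomputable def solTX (t x : ℝ) : ℝ :=
  -2 * (1 - cubic t x ^ (-1 / 3 : ℝ)) / t ^ 2 + 2 * (t ^ 2 + x) * cubic t x ^ (-4 / 3 : ℝ) / t

theorem hasDerivAt_cubic_snd (t x : ℝ) : HasDerivAt (cubic t) (3 * t) x :=
  ((((hasDerivAt_id x).const_mul (3 * t)).const_add (t ^ 3)).add_const 1).congr_deriv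
    (mul_one _)

theorem hasDerivAt_cubic_fst (t x : ℝ) :
    HasDerivAt (fun s => cubic s x) (3 * (t ^ 2 + x)) t :=
  (((hasDerivAt_pow 3 t).add (((hasDerivAt_id t).const_mul 3).mul_const x)).add_const
    1).congr_deriv (by push_cast; ring)

theorem contDiff_cubic {n : WithTop ℕ∞} :
    ContDiff ℝ n (fun p : ℝ × ℝ => cubic p.1 p.2) := by
  unfold cubic
  fun_prop

theorem isOpen_domain : IsOpen domain :=
  (isOpen_ne_fun continuous_fst continuous_const).inter
    (isOpen_lt continuous_const (contDiff_cubic (n := 0)).continuous)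

theorem contDiffOn_sol {n : WithTop ℕ∞} :
    ContDiffOn ℝ n (fun p : ℝ × ℝ => sol p.1 p.2) domain := by
  have hpow : ContDiffOn ℝ n (fun p : ℝ × ℝ => cubic p.1 p.2 ^ ((2 : ℝ) / 3)) domain :=
    contDiff_cubic.contDiffOn.rpow_const_of_ne fun _ hq => hq.2.ne'
  exact ((contDiffOn_const.add (by fun_prop)).sub hpow).div (by fun_prop)
    fun _ hq => pow_ne_zero 2 hq.1

variable {t x : ℝ}

theorem hasDerivAt_sol_snd (ht : t ≠ 0) (hc : cubic t x ≠ 0) :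
    HasDerivAt (sol t) (solX t x) x := by
  have hpow := (hasDerivAt_cubic_snd t x).rpow_const (p := 2 / 3) (Or.inl hc)
  refine (((((hasDerivAt_id x).const_mul (2 * t)).const_add 1).sub hpow).div_const
    (t ^ 2)).congr_deriv ?_
  rw [solX]
  norm_num
  field_simp

theorem hasDerivAt_solX_snd (ht : t ≠ 0) (hc : cubic t x ≠ 0) :
    HasDerivAt (solX t) (solXX t x) x := by
  have hpow := (hasDerivAt_cubic_snd t x).rpow_const (p := -1 / 3) (Or.inl hc)
  refine (((hpow.const_sub 1).const_mul 2).div_const t).congr_deriv ?_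
  rw [solXX]
  norm_num
  field_simp

theorem hasDerivAt_solX_fst (ht : t ≠ 0) (hc : cubic t x ≠ 0) :
    HasDerivAt (fun s => solX s x) (solTX t x) t := by
  have hpow := (hasDerivAt_cubic_fst t x).rpow_const (p := -1 / 3) (Or.inl hc)
  refine (((hpow.const_sub 1).const_mul 2).div (hasDerivAt_id t) ht).congr_deriv ?_
  rw [solTX]
  norm_num
  field_simp
  ring

theorem solTX_add_sol_mul_solXX_add_half_sq_solX (ht : t ≠ 0) (hc : 0 < cubic t x) :
    solTX t x + sol t x * solXX t x + 1 / 2 * solX t x ^ 2 = 0 := by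
  have hroot k := rpow_intCast_div_eq_zpow hc.le k 3
  set A := cubic t x ^ (1 / 3 : ℝ)
  have hA0 : A ≠ 0 := (rpow_pos_of_pos hc _).ne'
  have hA3 : A ^ 3 = t ^ 3 + 3 * t * x + 1 := by simpa [cubic] using (hroot 3).symm
  have hA2 := hroot 2
  have hAinv := hroot (-1)
  have hA4 := hroot (-4)
  push_cast at hA2 hAinv hA4
  simp only [sol, solX, solXX, solTX, hA2, hAinv, hA4]
  field_simp
  linear_combination (-2) * hA3

theorem d2_sol_eqOn : EqOn (uncurry (d2 sol)) (uncurry solX) domain :=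
  fun _ hp => (hasDerivAt_sol_snd hp.1 hp.2.ne').deriv

end HunterSaxton

open HunterSaxton in
/-- The explicit function `u(t,x) = (1 + 2tx − (t³ + 3tx + 1)^{2/3})/t²` is a smooth
solution of the Hunter–Saxton equation on `U = {t ≠ 0, t³ + 3tx + 1 > 0}`. -/
theorem hunterSaxton_explicit_solution
    (U : Set (ℝ × ℝ))
    (hUdef : U = {p : ℝ × ℝ | p.1 ≠ 0 ∧ p.1^3 + 3 * p.1 * p.2 + 1 > 0})
    (u : ℝ → ℝ → ℝ)
    (hdef : ∀ t x : ℝ,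
      u t x = (1 + 2 * t * x - (t^3 + 3 * t * x + 1) ^ ((2 : ℝ)/3)) / t^2) :
    Smooth2On u U ∧ ∀ p ∈ U,
      d1 (d2 u) p.1 p.2 + u p.1 p.2 * d2 (d2 u) p.1 p.2 + (1/2) * (d2 u p.1 p.2)^2 = 0 := by
  obtain rfl : u = sol := funext fun t => funext (hdef t)
  obtain rfl : U = domain := hUdef
  refine ⟨contDiffOn_sol, fun p hp => ?_⟩
  have hux : d2 sol p.1 p.2 = solX p.1 p.2 := d2_sol_eqOn hp
  have hutx : d1 solX p.1 p.2 = solTX p.1 p.2 := (hasDerivAt_solX_fst hp.1 hp.2.ne').deriv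
  have huxx : d2 solX p.1 p.2 = solXX p.1 p.2 := (hasDerivAt_solX_snd hp.1 hp.2.ne').deriv
  rw [d1_congr_of_eqOn isOpen_domain d2_sol_eqOn hp, d2_congr_of_eqOn isOpen_domain d2_sol_eqOn hp,
    hux, hutx, huxx]
  exact solTX_add_sol_mul_solXX_add_half_sq_solX hp.1 hp.2
end

section
/- Let α : ℝ → ℝ be smooth and nowhere vanishing, and let Q, P : ℝ → ℝ be smooth functions with Q'(J) = 1/α(J) and P'(J) = (J + α'(J))/α(J) for all J. Let g : ℝ → ℝ be smooth and nowhere vanishing. Define h(I,J) := e^{P(J)} / g(Q(J) + I) on ℝ². Then h solves the quotient equation ∂_I h(I,J) − α(J)·∂_J h(I,J) + (J + α'(J))·h(I,J) = 0 for all (I,J) ∈ ℝ². -/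
open Real

section QuotientOfCharacteristic

variable {E Q g : ℝ → ℝ} {E' Q' g' I J : ℝ}

lemma hasDerivAt_div_comp_const_add (hg : HasDerivAt g g' (Q J + I))
    (hg0 : g (Q J + I) ≠ 0) :
    HasDerivAt (fun s => E J / g (Q J + s)) (-(E J * g') / g (Q J + I) ^ 2) I :=
  ((hasDerivAt_const I (E J)).fun_div (hg.comp_const_add (Q J) I) hg0).congr_deriv (by ring)

lemma hasDerivAt_div_comp_add_const (hE : HasDerivAt E E' J) (hQ : HasDerivAt Q Q' J)
    (hg : HasDerivAt g g' (Q J + I)) (hg0 : g (Q J + I) ≠ 0) :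
    HasDerivAt (fun s => E s / g (Q s + I))
      ((E' * g (Q J + I) - E J * (g' * Q')) / g (Q J + I) ^ 2) J :=
  hE.fun_div (hg.comp J (hQ.add_const I)) hg0

lemma d1_sub_mul_d2_div_comp_add (a : ℝ → ℝ) (ha : a J ≠ 0) (hE : HasDerivAt E E' J)
    (hQ : HasDerivAt Q (1 / a J) J) (hg : DifferentiableAt ℝ g (Q J + I))
    (hg0 : g (Q J + I) ≠ 0) :
    d1 (fun x y => E y / g (Q y + x)) I J - a J * d2 (fun x y => E y / g (Q y + x)) I J
      = -(a J * E') / g (Q J + I) := by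
  rw [d1, d2, (hasDerivAt_div_comp_const_add hg.hasDerivAt hg0).deriv,
    (hasDerivAt_div_comp_add_const hE hQ hg.hasDerivAt hg0).deriv]
  field_simp
  ring

end QuotientOfCharacteristic

theorem generalized_hs_quotient_solution_general
    (α : ℝ → ℝ) (hα0 : ∀ J : ℝ, α J ≠ 0)
    (Q P : ℝ → ℝ)
    (hQ : ∀ J : ℝ, HasDerivAt Q (1 / α J) J)
    (hP : ∀ J : ℝ, HasDerivAt P ((J + deriv α J) / α J) J)
    (g : ℝ → ℝ) (hg : ContDiff ℝ (⊤ : ℕ∞) g) (hg0 : ∀ x : ℝ, g x ≠ 0)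
    (h : ℝ → ℝ → ℝ)
    (hdef : ∀ I J : ℝ, h I J = Real.exp (P J) / g (Q J + I)) :
    ∀ I J : ℝ,
      d1 h I J - α J * d2 h I J + (J + deriv α J) * h I J = 0 := by
  obtain rfl : h = fun I J => Real.exp (P J) / g (Q J + I) := funext₂ hdef
  intro I J
  rw [d1_sub_mul_d2_div_comp_add α (hα0 J) (hP J).exp (hQ J)
    (hg.differentiable (by simp) _) (hg0 _)]
  field_simp [hα0 J]
  ring

/-- General solution of the quotient equation `h_I − α(J) h_J + (J + α'(J)) h = 0` of
`u_{tx} + u·u_{xx} + α(u_x) = 0`: with `Q' = 1/α` and `P' = (J + α')/α`, the function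
`h(I,J) = e^{P(J)}/g(Q(J) + I)` is a solution for any smooth nowhere-vanishing `g`. -/
theorem generalized_hs_quotient_solution
    (α : ℝ → ℝ) (hα : ContDiff ℝ (⊤ : ℕ∞) α) (hα0 : ∀ J : ℝ, α J ≠ 0)
    (Q P : ℝ → ℝ)
    (hQs : ContDiff ℝ (⊤ : ℕ∞) Q) (hPs : ContDiff ℝ (⊤ : ℕ∞) P)
    (hQ : ∀ J : ℝ, HasDerivAt Q (1 / α J) J)
    (hP : ∀ J : ℝ, HasDerivAt P ((J + deriv α J) / α J) J)
    (g : ℝ → ℝ) (hg : ContDiff ℝ (⊤ : ℕ∞) g) (hg0 : ∀ x : ℝ, g x ≠ 0)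
    (h : ℝ → ℝ → ℝ)
    (hdef : ∀ I J : ℝ, h I J = Real.exp (P J) / g (Q J + I)) :
    ∀ I J : ℝ,
      d1 h I J - α J * d2 h I J + (J + deriv α J) * h I J = 0 :=
  generalized_hs_quotient_solution_general α hα0 Q P hQ hP g hg hg0 h hdef
end

section
/- Let α₁, α₂ : ℝ → ℝ be smooth, let A : ℝ → ℝ satisfy A'(x) = α₂(x), set P(x) := e^{A(x)}, let Q : ℝ → ℝ satisfy Q'(x) = α₁(x)·P(x), and let C : ℝ → ℝ be smooth. On the open set U := {(t,x) ∈ ℝ² : C(t) − Q(x) ≠ 0}, define u(t,x) := 2·P(x)/(C(t) − Q(x)). Then u is a smooth solution on U of the equation u_{tx} = u_t·(α₁(x)·u + α₂(x)). -/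
open Real

/-!
For fixed `t`, `P' = α₂ P` and `Q' = α₁ P` make `x ↦ u(t,x)` a solution of the Riccati equation
`u_x = ½ α₁ u² + α₂ u`. Differentiating this identity in `t` gives `u_{tx} = u_t (α₁ u + α₂)`.
-/

open Filter Topology

theorem contDiff_infty_of_hasDerivAt {𝕜 F : Type*} [NontriviallyNormedField 𝕜]
    [NormedAddCommGroup F] [NormedSpace 𝕜 F] {f f' : 𝕜 → F}
    (hf : ∀ x, HasDerivAt f (f' x) x) (hf' : ContDiff 𝕜 (⊤ : ℕ∞) f') :
    ContDiff 𝕜 (⊤ : ℕ∞) f := by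
  have hderiv : deriv f = f' := funext fun x => (hf x).deriv
  exact contDiff_infty_iff_deriv.2 ⟨fun x => (hf x).differentiableAt, hderiv ▸ hf'⟩

theorem hasDerivAt_riccati_profile {a b P Q : ℝ → ℝ} {c x : ℝ}
    (hP : HasDerivAt P (b x * P x) x) (hQ : HasDerivAt Q (a x * P x) x) (hx : c - Q x ≠ 0) :
    HasDerivAt (fun y => 2 * P y / (c - Q y))
      (a x / 2 * (2 * P x / (c - Q x)) ^ 2 + b x * (2 * P x / (c - Q x))) x := by
  refine ((hP.const_mul 2).fun_div (hQ.const_sub c) hx).congr_deriv ?_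
  field_simp
  ring

theorem d1_d2_eq_of_eventually_riccati {u : ℝ → ℝ → ℝ} {a b t x : ℝ}
    (hu : DifferentiableAt ℝ (fun s => u s x) t)
    (hux : (fun s => d2 u s x) =ᶠ[𝓝 t] fun s => a / 2 * u s x ^ 2 + b * u s x) :
    d1 (d2 u) t x = d1 u t x * (a * u t x + b) := by
  have hut : HasDerivAt (fun s => u s x) (d1 u t x) t := hu.hasDerivAt
  have hrhs := ((hut.fun_pow 2).const_mul (a / 2)).fun_add (hut.const_mul b)
  rw [d1, hux.deriv_eq, hrhs.deriv]
  ring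

/-- Example 3.2: with `A' = α₂`, `P = e^A`, `Q' = α₁·P`, the function
`u(t,x) = 2P(x)/(C(t) − Q(x))` is a smooth solution of `u_{tx} = u_t(α₁(x)u + α₂(x))`
on `U = {C(t) − Q(x) ≠ 0}`. -/
theorem riccati_family_solution
    (α₁ α₂ : ℝ → ℝ)
    (hα₁ : ContDiff ℝ (⊤ : ℕ∞) α₁) (hα₂ : ContDiff ℝ (⊤ : ℕ∞) α₂)
    (A : ℝ → ℝ) (hA : ∀ x : ℝ, HasDerivAt A (α₂ x) x)
    (P : ℝ → ℝ) (hP : ∀ x : ℝ, P x = Real.exp (A x))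
    (Q : ℝ → ℝ) (hQ : ∀ x : ℝ, HasDerivAt Q (α₁ x * P x) x)
    (C : ℝ → ℝ) (hC : ContDiff ℝ (⊤ : ℕ∞) C)
    (U : Set (ℝ × ℝ)) (hUdef : U = {p : ℝ × ℝ | C p.1 - Q p.2 ≠ 0})
    (u : ℝ → ℝ → ℝ)
    (hdef : ∀ t x : ℝ, u t x = 2 * P x / (C t - Q x)) :
    Smooth2On u U ∧ ∀ p ∈ U,
      d1 (d2 u) p.1 p.2 = d1 u p.1 p.2 * (α₁ p.2 * u p.1 p.2 + α₂ p.2) := by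
  have hPexp : P = fun x => Real.exp (A x) := funext hP
  have hP' : ∀ x, HasDerivAt P (α₂ x * P x) x := fun x => by
    simpa only [hPexp, mul_comm] using (hA x).exp
  have hPsmooth : ContDiff ℝ (⊤ : ℕ∞) P :=
    hPexp ▸ Real.contDiff_exp.comp (contDiff_infty_of_hasDerivAt hA hα₂)
  have hQsmooth := contDiff_infty_of_hasDerivAt hQ (hα₁.mul hPsmooth)
  subst hUdef
  refine ⟨?_, ?_⟩
  · rw [Smooth2On, funext fun p : ℝ × ℝ => hdef p.1 p.2]
    exact (contDiff_const.mul (hPsmooth.comp contDiff_snd)).contDiffOn.div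
      ((hC.comp contDiff_fst).sub (hQsmooth.comp contDiff_snd)).contDiffOn fun p hp => hp
  · rintro ⟨t, x⟩ (ht : C t - Q x ≠ 0)
    have hopen : IsOpen {s | C s - Q x ≠ 0} :=
      isOpen_ne_fun (hC.continuous.sub continuous_const) continuous_const
    apply d1_d2_eq_of_eventually_riccati
    · simp only [hdef]
      exact (differentiableAt_const _).div ((hC.differentiable (by simp) t).sub_const _) ht
    · filter_upwards [hopen.mem_nhds ht] with s hs
      simp only [d2, hdef]
      exact (hasDerivAt_riccati_profile (hP' x) (hQ x) hs).deriv
end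

section
/- Let C, G : ℝ → ℝ be smooth and let U := {(t,x) ∈ ℝ² : C(t) − G(x) > 0}. Define u : U → ℝ by u(t,x) := −ln(C(t) − G(x)). Then u is a smooth solution of the equation u_{tx} = u_t·u_x on U. -/
open Real

/-!
With `F(t,x) = C(t) − G(x)` and `u = −ln F` one has `u_t = −C'/F` and `u_x = G'/F`.
Differentiating `u_x` in `t` gives `u_{tx} = −C'G'/F² = u_t·u_x`.
-/

namespace NegLogSub

variable {C G : ℝ → ℝ} {t x : ℝ}

theorem smooth2On (hC : ContDiff ℝ (⊤ : ℕ∞) C) (hG : ContDiff ℝ (⊤ : ℕ∞) G) :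
    Smooth2On (fun t x => -log (C t - G x)) {p | C p.1 - G p.2 ≠ 0} :=
  (((hC.comp contDiff_fst).sub (hG.comp contDiff_snd)).contDiffOn.log fun _ hp => hp).neg

theorem d1_eq (hC : DifferentiableAt ℝ C t) (h : C t - G x ≠ 0) :
    d1 (fun t x => -log (C t - G x)) t x = -deriv C t / (C t - G x) := by
  have hF : HasDerivAt (fun s => C s - G x) (deriv C t) t := hC.hasDerivAt.sub_const (G x)
  rw [d1, (hF.log h).fun_neg.deriv, neg_div]

theorem d2_eq (hG : DifferentiableAt ℝ G x) (h : C t - G x ≠ 0) :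
    d2 (fun t x => -log (C t - G x)) t x = deriv G x / (C t - G x) := by
  have hF : HasDerivAt (fun r => C t - G r) (-deriv G x) x := hG.hasDerivAt.const_sub (C t)
  rw [d2, (hF.log h).fun_neg.deriv, neg_div, neg_neg]

theorem d1_d2_eq (hC : DifferentiableAt ℝ C t) (hG : DifferentiableAt ℝ G x)
    (h : C t - G x ≠ 0) :
    d1 (d2 fun t x => -log (C t - G x)) t x = -deriv C t * deriv G x / (C t - G x) ^ 2 := by
  have hnear : ∀ᶠ s in nhds t, C s - G x ≠ 0 :=
    (hC.continuousAt.sub continuousAt_const).eventually_ne h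
  have hux : (fun s => d2 (fun t x => -log (C t - G x)) s x) =ᶠ[nhds t]
      fun s => deriv G x / (C s - G x) :=
    hnear.mono fun s hs => d2_eq hG hs
  have hF : HasDerivAt (fun s => C s - G x) (deriv C t) t := hC.hasDerivAt.sub_const (G x)
  have hdiv := (hasDerivAt_const t (deriv G x)).fun_div hF h
  rw [d1, hux.deriv_eq, hdiv.deriv]
  ring

end NegLogSub

/-- Example 3.3: `u(t,x) = −ln(C(t) − G(x))` is a smooth solution of `u_{tx} = u_t·u_x`
on `U = {C(t) − G(x) > 0}`. -/
theorem utx_eq_ut_ux_solution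
    (C G : ℝ → ℝ)
    (hC : ContDiff ℝ (⊤ : ℕ∞) C) (hG : ContDiff ℝ (⊤ : ℕ∞) G)
    (U : Set (ℝ × ℝ)) (hUdef : U = {p : ℝ × ℝ | C p.1 - G p.2 > 0})
    (u : ℝ → ℝ → ℝ)
    (hdef : ∀ t x : ℝ, u t x = -Real.log (C t - G x)) :
    Smooth2On u U ∧ ∀ p ∈ U,
      d1 (d2 u) p.1 p.2 = d1 u p.1 p.2 * d2 u p.1 p.2 := by
  obtain rfl : u = fun t x => -log (C t - G x) := funext fun t => funext (hdef t)
  subst hUdef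
  have hCd : Differentiable ℝ C := hC.differentiable (by simp)
  have hGd : Differentiable ℝ G := hG.differentiable (by simp)
  refine ⟨(NegLogSub.smooth2On hC hG).mono fun p hp => ne_of_gt hp, fun ⟨t, x⟩ hp => ?_⟩
  have h : C t - G x ≠ 0 := ne_of_gt hp
  rw [NegLogSub.d1_d2_eq (hCd t) (hGd x) h, NegLogSub.d1_eq (hCd t) h, NegLogSub.d2_eq (hGd x) h]
  field_simp
end
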